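/- arXiv:2201.04793 — 5 statements merged into one kernel-verified Lean document; each statement's English description precedes it below -/
import Mathlib

section
/- If an r×s array filled with symbols from [k], each symbol occurring at most once per row and at most once per column, can be extended to an n×n array in which symbol ℓ occurs exactly ρ_ℓ times (each symbol still at most once per row and column), then for every symbol ℓ, the number e_ℓ of occurrences of ℓ in the original r×s array satisfies e_ℓ ≥ r + s + ρ_ℓ − 2n. -/
open Finset

/-- `L` is a (partial) latin array: each symbol occurs at most once in each
row and at most once in each column. -/
def latinArr {r s k : ℕ} (L : Fin r → Fin s → Fin k) : Prop :=
  (∀ i, Function.Injective (L i)) ∧ (∀ j, Function.Injective (fun i => L i j))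

/-- Number of occurrences of symbol `ℓ` in `L`. -/
def symCount {r s k : ℕ} (L : Fin r → Fin s → Fin k) (ℓ : Fin k) : ℕ :=
  ((univ : Finset (Fin r × Fin s)).filter (fun p => L p.1 p.2 = ℓ)).card

/-- `μ_I(ℓ)`: number of rows in `I` in which symbol `ℓ` is missing. -/
def muRows {r s k : ℕ} (L : Fin r → Fin s → Fin k) (I : Finset (Fin r)) (ℓ : Fin k) : ℕ :=
  (I.filter (fun i => ∀ j, L i j ≠ ℓ)).card

/-- `μ_J(ℓ)`: number of columns in `J` in which symbol `ℓ` is missing. -/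
def muCols {r s k : ℕ} (L : Fin r → Fin s → Fin k) (J : Finset (Fin s)) (ℓ : Fin k) : ℕ :=
  (J.filter (fun j => ∀ i, L i j ≠ ℓ)).card

/-- `μ_K(i)` for a row `i`: number of symbols of `K` missing in row `i`. -/
def muSymRow {r s k : ℕ} (L : Fin r → Fin s → Fin k) (K : Finset (Fin k)) (i : Fin r) : ℕ :=
  (K.filter (fun ℓ => ∀ j, L i j ≠ ℓ)).card

/-- `μ_K(j)` for a column `j`: number of symbols of `K` missing in column `j`. -/
def muSymCol {r s k : ℕ} (L : Fin r → Fin s → Fin k) (K : Finset (Fin k)) (j : Fin s) : ℕ :=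
  (K.filter (fun ℓ => ∀ i, L i j ≠ ℓ)).card

/-- `S` is an `n × n` `ρ`-latin square. -/
def rhoLatinSquare {n k : ℕ} (ρ : Fin k → ℕ) (S : Fin n → Fin n → Fin k) : Prop :=
  latinArr S ∧ ∀ ℓ, symCount S ℓ = ρ ℓ

/-- `S` extends `L` on the top-left `r × s` corner. -/
def extends' {r s n k : ℕ} (hr : r ≤ n) (hs : s ≤ n)
    (L : Fin r → Fin s → Fin k) (S : Fin n → Fin n → Fin k) : Prop :=
  ∀ i j, S (Fin.castLE hr i) (Fin.castLE hs j) = L i j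

/-! A symbol `ℓ` of the square `S` lies either in the `r × s` corner, where its occurrences are those
of `L`, or in one of the last `n - r` rows, or in one of the last `n - s` columns. Since `ℓ` occurs
at most once in each row and each column, `ρ_ℓ ≤ e_ℓ + (n - r) + (n - s)`. -/

section Occurrences

variable {n m : ℕ} {α : Type*} [DecidableEq α]

lemma card_occurrences_in_rows_from_le (S : Fin n → Fin m → α)
    (hS : ∀ i, Function.Injective (S i)) (a : α) (r : ℕ) :
    #{p : Fin n × Fin m | S p.1 p.2 = a ∧ r ≤ (p.1 : ℕ)} ≤ n - r := by
  calc _ ≤ #(Ico r n) := by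
        refine card_le_card_of_injOn (fun p => (p.1 : ℕ)) (fun p hp => ?_) fun p hp q hq hpq => ?_
        · simp only [mem_coe, mem_filter, mem_univ, true_and] at hp
          simp [hp.2, p.1.isLt]
        · simp only [mem_coe, mem_filter, mem_univ, true_and] at hp hq
          have hrow : p.1 = q.1 := Fin.ext hpq
          exact Prod.ext hrow (hS q.1 (by simpa [hrow, hq.1] using hp.1))
    _ = n - r := Nat.card_Ico r n

lemma card_occurrences_in_cols_from_le (S : Fin n → Fin m → α)
    (hS : ∀ j, Function.Injective (fun i => S i j)) (a : α) (s : ℕ) :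
    #{p : Fin n × Fin m | S p.1 p.2 = a ∧ s ≤ (p.2 : ℕ)} ≤ m - s := by
  calc _ ≤ #(Ico s m) := by
        refine card_le_card_of_injOn (fun p => (p.2 : ℕ)) (fun p hp => ?_) fun p hp q hq hpq => ?_
        · simp only [mem_coe, mem_filter, mem_univ, true_and] at hp
          simp [hp.2, p.2.isLt]
        · simp only [mem_coe, mem_filter, mem_univ, true_and] at hp hq
          have hcol : p.2 = q.2 := Fin.ext hpq
          exact Prod.ext (hS q.2 (by simpa [hcol, hq.1] using hp.1)) hcol
    _ = m - s := Nat.card_Ico s m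

end Occurrences

section Corner

variable {n m r s k : ℕ}

lemma symCount_le_corner_add_rows_add_cols (S : Fin n → Fin m → Fin k) (ℓ : Fin k) :
    symCount S ℓ ≤ #{p : Fin n × Fin m | S p.1 p.2 = ℓ ∧ (p.1 : ℕ) < r ∧ (p.2 : ℕ) < s}
      + #{p : Fin n × Fin m | S p.1 p.2 = ℓ ∧ r ≤ (p.1 : ℕ)}
      + #{p : Fin n × Fin m | S p.1 p.2 = ℓ ∧ s ≤ (p.2 : ℕ)} := by
  refine (card_le_card fun p hp => ?_).trans
    ((card_union_le _ _).trans (add_le_add_left (card_union_le _ _) _))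
  simp only [mem_filter, mem_univ, true_and, mem_union] at hp ⊢
  omega

lemma symCount_eq_card_corner (hrn : r ≤ n) (hsn : s ≤ n) {L : Fin r → Fin s → Fin k}
    {S : Fin n → Fin n → Fin k} (hext : extends' hrn hsn L S) (ℓ : Fin k) :
    symCount L ℓ = #{p : Fin n × Fin n | S p.1 p.2 = ℓ ∧ (p.1 : ℕ) < r ∧ (p.2 : ℕ) < s} := by
  refine card_nbij (fun p => (Fin.castLE hrn p.1, Fin.castLE hsn p.2)) ?_ ?_ ?_
  · intro p hp
    simp only [mem_coe, mem_filter, mem_univ, true_and] at hp ⊢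
    exact ⟨(hext _ _).trans hp, p.1.isLt, p.2.isLt⟩
  · intro p _ q _ hpq
    simp only [Prod.mk.injEq] at hpq
    exact Prod.ext (Fin.castLE_injective hrn hpq.1) (Fin.castLE_injective hsn hpq.2)
  · rintro ⟨i, j⟩ hp
    simp only [mem_coe, mem_filter, mem_univ, true_and] at hp
    refine ⟨(⟨i, hp.2.1⟩, ⟨j, hp.2.2⟩), ?_, rfl⟩
    simpa only [mem_coe, mem_filter, mem_univ, true_and] using
      (hext ⟨i, hp.2.1⟩ ⟨j, hp.2.2⟩).symm.trans hp.1

end Corner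

theorem stmt0_general (n k r s : ℕ) (hrn : r ≤ n) (hsn : s ≤ n)
    (ρ : Fin k → ℕ)
    (L : Fin r → Fin s → Fin k)
    (S : Fin n → Fin n → Fin k) (hS : rhoLatinSquare ρ S)
    (hext : extends' hrn hsn L S) :
    ∀ ℓ, r + s + ρ ℓ ≤ symCount L ℓ + 2 * n := by
  intro ℓ
  obtain ⟨⟨hrows, hcols⟩, hcount⟩ := hS
  have hsplit := symCount_le_corner_add_rows_add_cols (r := r) (s := s) S ℓ
  have hrow := card_occurrences_in_rows_from_le S hrows ℓ r
  have hcol := card_occurrences_in_cols_from_le S hcols ℓ s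
  rw [← symCount_eq_card_corner hrn hsn hext, hcount] at hsplit
  omega

/-- If an `r × s` latin rectangle extends to an `n × n` `ρ`-latin square, then
`e_ℓ ≥ r + s + ρ_ℓ - 2n` for every symbol `ℓ`. -/
theorem stmt0 (n k r s : ℕ) (hr : 0 < r) (hs : 0 < s) (hrn : r ≤ n) (hsn : s ≤ n)
    (hnk : n ≤ k) (ρ : Fin k → ℕ) (hρ1 : ∀ ℓ, 1 ≤ ρ ℓ) (hρn : ∀ ℓ, ρ ℓ ≤ n)
    (hsum : ∑ ℓ, ρ ℓ = n ^ 2)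
    (L : Fin r → Fin s → Fin k) (hL : latinArr L)
    (S : Fin n → Fin n → Fin k) (hS : rhoLatinSquare ρ S)
    (hext : extends' hrn hsn L S) :
    ∀ ℓ, r + s + ρ ℓ ≤ symCount L ℓ + 2 * n :=
  stmt0_general n k r s hrn hsn ρ L S hS hext
end

section
/- For all natural numbers n, k and every sequence ρ = (ρ_1,…,ρ_k) with 1 ≤ ρ_ℓ ≤ n ≤ k for all ℓ and Σ_{ℓ=1}^k ρ_ℓ = n², there exists a ρ-latin square of order n, i.e., an n×n array on symbols [k] such that each symbol occurs at most once in each row, at most once in each column, and symbol ℓ occurs exactly ρ_ℓ times. -/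
open Finset

/-!
Sort the symbols by multiplicity and write them as a word in which symbol `ℓ` fills a block of
`ρ ℓ ≤ n` consecutive positions. Fill the square along its broken diagonals, position `i + n * d`
going to cell `(i, i + d)`. Any `n` consecutive positions lie in distinct rows, and two positions
less than `n` apart lie in distinct columns unless they are exactly `n - 1` apart and straddle two
diagonals. That can only happen inside a block of length `n` that does not start at a multiple of
`n`; after sorting, the full blocks come last and therefore each fills a whole diagonal.
-/

open Function

-- A sufficient condition for the filling along broken diagonals (`diagEquiv`) to be latin.
def IsDiagonalWord (n : ℕ) {N : ℕ} {α : Type*} (w : Fin N → α) : Prop :=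
  ∀ p q : Fin N, p < q → w p = w q → (q : ℕ) < p + n ∧ ((q : ℕ) + 1 = p + n → n ∣ (p : ℕ))

lemma IsDiagonalWord.comp {n N : ℕ} {α β : Type*} {w : Fin N → α} (hw : IsDiagonalWord n w)
    {g : α → β} (hg : Injective g) : IsDiagonalWord n (g ∘ w) :=
  fun p q hpq hw' => hw p q hpq (hg hw')

lemma IsDiagonalWord.comp_cast {n N M : ℕ} {α : Type*} {w : Fin N → α} (hw : IsDiagonalWord n w)
    (h : M = N) : IsDiagonalWord n (w ∘ Fin.cast h) :=
  fun _ _ hpq hw' => hw _ _ hpq hw'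

lemma eq_or_eq_add_one_of_add_mul_lt {n i i' d d' : ℕ} (hi : i < n) (hi' : i' < n)
    (h : i + n * d < i' + n * d') (h' : i' + n * d' < i + n * d + n) : d' = d ∨ d' = d + 1 := by
  have h1 : d ≤ d' := by
    by_contra! hlt
    have := Nat.mul_le_mul_left n (Nat.succ_le_of_lt hlt)
    rw [Nat.mul_succ] at this
    omega
  have h2 : d' ≤ d + 1 := by
    by_contra! hlt
    have := Nat.mul_le_mul_left n (Nat.succ_le_of_lt hlt)
    rw [Nat.mul_succ, Nat.mul_succ] at this
    omega
  omega

section DiagonalFill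

variable {n : ℕ} [NeZero n]

-- Position `i + n * d` is the cell `(i, i + d)` on the `d`-th broken diagonal.
variable (n) in
def diagEquiv : Fin n × Fin n ≃ Fin (n * n) :=
  (Equiv.mk (fun c => (c.2 - c.1, c.1)) (fun c => (c.2, c.1 + c.2))
    (fun c => by simp) (fun c => by simp)).trans finProdFinEquiv

lemma diagEquiv_val (i j : Fin n) : (diagEquiv n (i, j) : ℕ) = i + n * (j - i : Fin n) := rfl

def diagFill {α : Type*} (w : Fin (n * n) → α) (i j : Fin n) : α := w (diagEquiv n (i, j))

variable {k : ℕ} {w : Fin (n * n) → Fin k}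

lemma IsDiagonalWord.injective_row (hw : IsDiagonalWord n w) (i : Fin n) :
    Injective (diagFill w i) := by
  intro j j' h
  by_contra hne
  wlog hlt : (j - i : Fin n) < j' - i generalizing j j'
  · exact this h.symm (Ne.symm hne)
      ((not_lt.mp hlt).lt_of_ne fun hd => hne (sub_left_injective hd).symm)
  have hmul := Nat.mul_le_mul_left n (Nat.succ_le_of_lt (Fin.lt_def.mp hlt))
  rw [Nat.mul_succ] at hmul
  have hpq : diagEquiv n (i, j) < diagEquiv n (i, j') := by
    rw [Fin.lt_def, diagEquiv_val, diagEquiv_val]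
    omega
  have hnear := (hw _ _ hpq h).1
  rw [diagEquiv_val, diagEquiv_val] at hnear
  omega

lemma IsDiagonalWord.injective_col (hw : IsDiagonalWord n w) (j : Fin n) :
    Injective (fun i => diagFill w i j) := by
  intro i i' h
  by_contra hne
  wlog hlt : diagEquiv n (i, j) < diagEquiv n (i', j) generalizing i i'
  · refine this h.symm (Ne.symm hne) ((not_lt.mp hlt).lt_of_ne fun hp => hne ?_)
    simpa using (diagEquiv n).injective hp.symm
  obtain ⟨hnear, haligned⟩ := hw _ _ hlt h
  rw [Fin.lt_def, diagEquiv_val, diagEquiv_val] at hlt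
  rw [diagEquiv_val, diagEquiv_val] at hnear haligned
  have hsum := Fin.val_add_eq_ite i (j - i)
  have hsum' := Fin.val_add_eq_ite i' (j - i')
  rw [add_sub_cancel] at hsum hsum'
  rcases eq_or_eq_add_one_of_add_mul_lt i.2 i'.2 hlt hnear with hd | hd
  · exact hne (sub_right_injective (Fin.ext hd.symm))
  · -- the two cells lie on consecutive diagonals, so `i = i' + 1` and the window is full
    rw [hd, Nat.mul_succ] at hlt hnear haligned
    have hii' : (i : ℕ) = i' + 1 := by
      rw [hd] at hsum'
      split_ifs at hsum hsum' <;> omega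
    have hdvd : n ∣ (i : ℕ) := (Nat.dvd_add_left (dvd_mul_right n _)).mp (haligned (by omega))
    have := Nat.eq_zero_of_dvd_of_lt hdvd i.2
    omega

lemma IsDiagonalWord.latinArr_diagFill (hw : IsDiagonalWord n w) : latinArr (diagFill w) :=
  ⟨hw.injective_row, hw.injective_col⟩

lemma symCount_diagFill (w : Fin (n * n) → Fin k) (ℓ : Fin k) :
    symCount (diagFill w) ℓ = #{p | w p = ℓ} :=
  card_equiv (diagEquiv n) (by simp [diagFill])

end DiagonalFill

section BlockWord

variable {k : ℕ}

-- The word `0 ^ f 0, 1 ^ f 1, …, (k - 1) ^ f (k - 1)`.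
def blockWord (f : Fin k → ℕ) (p : Fin (∑ i, f i)) : Fin k := (finSigmaFinEquiv.symm p).1

lemma card_blockWord_eq (f : Fin k → ℕ) (t : Fin k) : #{p | blockWord f p = t} = f t := by
  calc #{p | blockWord f p = t} = #{x : (i : Fin k) × Fin (f i) | x.1 = t} :=
        card_equiv finSigmaFinEquiv.symm fun p => by simp only [mem_filter, mem_univ, true_and]; rfl
    _ = #(univ.map (Embedding.sigmaMk (β := fun i => Fin (f i)) t)) := by
        congr 1
        ext ⟨i, a⟩
        simp only [mem_filter, mem_univ, true_and, mem_map, Embedding.sigmaMk_apply]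
        constructor
        · rintro rfl
          exact ⟨a, rfl⟩
        · rintro ⟨b, hb⟩
          exact (Sigma.mk.inj_iff.mp hb).1.symm
    _ = f t := by rw [card_map, card_univ, Fintype.card_fin]

lemma sum_castLE_eq_sum_Iio (f : Fin k → ℕ) (t : Fin k) :
    ∑ i : Fin t, f (Fin.castLE t.2.le i) = ∑ i ∈ Iio t, f i := by
  have hmap : univ.map (Fin.castLEEmb t.2.le) = Iio t := by
    ext i
    simp only [mem_map, mem_univ, true_and, mem_Iio, Fin.castLEEmb_apply]
    exact ⟨by rintro ⟨a, rfl⟩; exact a.2, fun h => ⟨⟨i, h⟩, rfl⟩⟩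
  rw [← hmap, sum_map]
  rfl

variable {n : ℕ} {f : Fin k → ℕ}

-- All blocks from `t` on have the full length `n`.
lemma dvd_sum_Iio_of_eq (hf : Monotone f) (hfn : ∀ i, f i ≤ n) (hn : n ∣ ∑ i, f i) {t : Fin k}
    (ht : f t = n) : n ∣ ∑ i ∈ Iio t, f i := by
  have htail : ∑ i ∈ univ with ¬ i < t, f i = #{i | ¬ i < t} * n :=
    sum_const_nat fun i hi => le_antisymm (hfn i)
      (ht ▸ hf (not_lt.mp (mem_filter.mp hi).2))
  rw [← sum_filter_add_sum_filter_not univ (· < t), htail] at hn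
  simpa only [filter_gt_eq_Iio] using (Nat.dvd_add_left (dvd_mul_left n _)).mp hn

lemma isDiagonalWord_blockWord (hf : Monotone f) (hfn : ∀ i, f i ≤ n) (hn : n ∣ ∑ i, f i) :
    IsDiagonalWord n (blockWord f) := by
  intro p q hpq hw
  obtain ⟨⟨t, a⟩, rfl⟩ := finSigmaFinEquiv.surjective p
  obtain ⟨⟨t', b⟩, rfl⟩ := finSigmaFinEquiv.surjective q
  simp only [blockWord, Equiv.symm_apply_apply] at hw
  subst hw
  rw [Fin.lt_def, finSigmaFinEquiv_apply, finSigmaFinEquiv_apply] at hpq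
  simp only [finSigmaFinEquiv_apply]
  have hb := b.2
  have hft := hfn t
  refine ⟨by omega, fun hfull => ?_⟩
  have ha : (a : ℕ) = 0 := by omega
  rw [ha, add_zero, sum_castLE_eq_sum_Iio]
  exact dvd_sum_Iio_of_eq hf hfn hn (by omega)

end BlockWord

lemma exists_isDiagonalWord_card_eq {n k : ℕ} (ρ : Fin k → ℕ) (hρ : ∀ ℓ, ρ ℓ ≤ n)
    (hsum : ∑ ℓ, ρ ℓ = n * n) :
    ∃ w : Fin (n * n) → Fin k, IsDiagonalWord n w ∧ ∀ ℓ, #{p | w p = ℓ} = ρ ℓ := by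
  set σ := Tuple.sort ρ
  have hsum' : ∑ i, ρ (σ i) = n * n := (Equiv.sum_comp σ ρ).trans hsum
  refine ⟨σ ∘ blockWord (ρ ∘ σ) ∘ Fin.cast hsum'.symm, ?_, fun ℓ => ?_⟩
  · exact ((isDiagonalWord_blockWord (Tuple.monotone_sort ρ) (fun i => hρ _)
      (hsum' ▸ dvd_mul_right n n)).comp_cast _).comp σ.injective
  · calc #{p | (σ ∘ blockWord (ρ ∘ σ) ∘ Fin.cast hsum'.symm) p = ℓ}
          = #{p | blockWord (ρ ∘ σ) p = σ.symm ℓ} :=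
          card_equiv (finCongr hsum'.symm) fun p => by
            simp [← Equiv.eq_symm_apply]
      _ = ρ ℓ := by rw [card_blockWord_eq, comp_apply, Equiv.apply_symm_apply]

theorem stmt1_general (n k : ℕ) (ρ : Fin k → ℕ) (hρn : ∀ ℓ, ρ ℓ ≤ n)
    (hsum : ∑ ℓ, ρ ℓ = n ^ 2) :
    ∃ S : Fin n → Fin n → Fin k, rhoLatinSquare ρ S := by
  obtain ⟨w, hw, hcount⟩ := exists_isDiagonalWord_card_eq ρ hρn (by rw [hsum, sq])
  rcases n.eq_zero_or_pos with rfl | hn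
  · refine ⟨fun i => i.elim0, ⟨fun i => i.elim0, fun j => j.elim0⟩, fun ℓ => ?_⟩
    simpa [symCount, eq_comm] using hcount ℓ
  · have : NeZero n := ⟨hn.ne'⟩
    exact ⟨diagFill w, hw.latinArr_diagFill, fun ℓ => (symCount_diagFill w ℓ).trans (hcount ℓ)⟩

/-- For every `ρ = (ρ_1, …, ρ_k)` with `1 ≤ ρ_ℓ ≤ n ≤ k` and `∑ ρ_ℓ = n²`,
there exists a `ρ`-latin square of order `n`. -/
theorem stmt1 (n k : ℕ) (ρ : Fin k → ℕ) (hρ1 : ∀ ℓ, 1 ≤ ρ ℓ) (hρn : ∀ ℓ, ρ ℓ ≤ n)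
    (hnk : n ≤ k) (hsum : ∑ ℓ, ρ ℓ = n ^ 2) :
    ∃ S : Fin n → Fin n → Fin k, rhoLatinSquare ρ S :=
  stmt1_general n k ρ hρn hsum
end

section
/- An r×n ρ-latin rectangle L on symbols [k] can be completed to an n×n ρ-latin square if and only if ρ_ℓ − e_ℓ ≤ n − r for all ℓ ∈ [k] and, for every subset J of the n columns, |J|(n − r) ≤ Σ_{ℓ∈[k]} min{ρ_ℓ − e_ℓ, μ_J(ℓ)}, where μ_J(ℓ) is the number of columns in J missing symbol ℓ. -/
open Finset

/-! Write `n = r + m`. Completing `L` means adding an `m × n` latin array `B` whose column `j`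
avoids the symbols of column `j` of `L` and in which each symbol `ℓ` occurs
`d ℓ = ρ ℓ - e ℓ` times. Necessity is counting: a symbol occurs at most once in each row of
`B`, and at most once in each column of `B` in which `L` misses it.

For sufficiency, the conditions of the theorem are exactly the cut conditions of Gale's
supply–demand theorem for the network in which column `j` supplies `m` units, symbol `ℓ`
demands `d ℓ`, and unit arcs join `j` to the symbols missing from column `j`. Gale's theorem
(proved by routing one unit at a time, the greatest tight set telling where it may go) chooses
for each column a set of `m` missing symbols, symbol `ℓ` being chosen `d ℓ` times, and König's
edge-colouring theorem arranges these sets into `m` latin rows. -/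

open Function

lemma Finset.sum_update_sub_one_add {ι : Type*} [DecidableEq ι] {f : ι → ℕ} {i : ι}
    (hi : 0 < f i) (s : Finset ι) :
    ∑ j ∈ s, update f i (f i - 1) j + (if i ∈ s then 1 else 0) = ∑ j ∈ s, f j := by
  split_ifs with h
  · rw [sum_update_of_mem h, ← add_sum_erase _ _ h, sdiff_singleton_eq_erase]
    omega
  · rw [sum_update_of_notMem h, add_zero]

section Transportation

variable {ι α : Type*} [DecidableEq α]

def degOn (A : ι → Finset α) (J : Finset ι) (ℓ : α) : ℕ := #{j ∈ J | ℓ ∈ A j}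

lemma degOn_mono (A : ι → Finset α) {J J' : Finset ι} (h : J ⊆ J') (ℓ : α) :
    degOn A J ℓ ≤ degOn A J' ℓ :=
  card_le_card (filter_subset_filter _ h)

section

variable [DecidableEq ι] (A : ι → Finset α)

lemma degOn_union_add_degOn_inter (J J' : Finset ι) (ℓ : α) :
    degOn A (J ∪ J') ℓ + degOn A (J ∩ J') ℓ = degOn A J ℓ + degOn A J' ℓ := by
  rw [degOn, degOn, filter_union, filter_inter_distrib]
  exact card_union_add_card_inter _ _

lemma degOn_update_add (j₀ : ι) (s : Finset α) (J : Finset ι) (ℓ : α) :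
    degOn (update A j₀ s) J ℓ + (if j₀ ∈ J ∧ ℓ ∈ A j₀ then 1 else 0) =
      degOn A J ℓ + (if j₀ ∈ J ∧ ℓ ∈ s then 1 else 0) := by
  have hrest : ∀ j ∈ J.erase j₀, (ℓ ∈ update A j₀ s j ↔ ℓ ∈ A j) := fun j hj => by
    rw [update_of_ne (ne_of_mem_erase hj)]
  by_cases hj₀ : j₀ ∈ J
  · simp only [degOn, card_filter, ← add_sum_erase _ _ hj₀, sum_congr rfl
      (fun j hj => if_congr (hrest j hj) rfl rfl), update_self, hj₀, true_and]
    split_ifs <;> omega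
  · rw [erase_eq_of_notMem hj₀] at hrest
    simp only [degOn, hj₀, false_and, if_false, add_zero]
    exact congrArg card (filter_congr hrest)

lemma degOn_insert {j₀ : ι} {J : Finset ι} (h : j₀ ∉ J) (ℓ : α) :
    degOn A (insert j₀ J) ℓ = degOn A J ℓ + if ℓ ∈ A j₀ then 1 else 0 := by
  rw [degOn, filter_insert]
  split_ifs with hℓ
  · rw [card_insert_of_notMem (fun h' => h (mem_filter.mp h').1), degOn]
  · rfl

end

variable [Fintype α] (d : α → ℕ) (A : ι → Finset α)

/-- The most the sources `J` can ship: sink `ℓ` accepts at most its demand `d ℓ`, and at most one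
unit along each of its arcs from `J`. -/
def capacity (J : Finset ι) : ℕ := ∑ ℓ, min (d ℓ) (degOn A J ℓ)

lemma capacity_empty : capacity d A ∅ = 0 := by
  simp [capacity, degOn]

def GaleCondition (b : ι → ℕ) : Prop := ∀ J : Finset ι, ∑ j ∈ J, b j ≤ capacity d A J

variable [DecidableEq ι]

lemma capacity_union_add_capacity_inter_le (J J' : Finset ι) :
    capacity d A (J ∪ J') + capacity d A (J ∩ J') ≤ capacity d A J + capacity d A J' := by
  simp only [capacity, ← sum_add_distrib]
  refine sum_le_sum fun ℓ _ => ?_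
  have := degOn_union_add_degOn_inter A J J' ℓ
  have := degOn_mono A (inter_subset_left : J ∩ J' ⊆ J) ℓ
  have := degOn_mono A (subset_union_left : J ⊆ J ∪ J') ℓ
  omega

lemma capacity_update_erase_add {j₀ : ι} {ℓ₀ : α} (hℓ₀ : ℓ₀ ∈ A j₀) (J : Finset ι) :
    capacity (update d ℓ₀ (d ℓ₀ - 1)) (update A j₀ ((A j₀).erase ℓ₀)) J +
        min (d ℓ₀) (degOn A J ℓ₀) =
      capacity d A J + min (d ℓ₀ - 1) (degOn A J ℓ₀ - if j₀ ∈ J then 1 else 0) := by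
  have hdeg : ∀ ℓ, degOn (update A j₀ ((A j₀).erase ℓ₀)) J ℓ =
      degOn A J ℓ - if j₀ ∈ J ∧ ℓ = ℓ₀ then 1 else 0 := fun ℓ => by
    have := degOn_update_add A j₀ ((A j₀).erase ℓ₀) J ℓ
    rcases eq_or_ne ℓ ℓ₀ with rfl | hne
    · simp only [hℓ₀, mem_erase, ne_eq, not_true_eq_false, and_false, if_false,
        and_true, add_zero] at this ⊢
      omega
    · simp only [mem_erase, ne_eq, hne, not_false_eq_true, true_and, and_false, if_false] at this ⊢
      omega
  have hother : ∀ ℓ ∈ univ.erase ℓ₀, min (update d ℓ₀ (d ℓ₀ - 1) ℓ)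
      (degOn (update A j₀ ((A j₀).erase ℓ₀)) J ℓ) = min (d ℓ) (degOn A J ℓ) := fun ℓ hℓ => by
    have hne := ne_of_mem_erase hℓ
    rw [update_of_ne hne, hdeg, if_neg fun h => hne h.2, Nat.sub_zero]
  rw [capacity, capacity, ← add_sum_erase _ _ (mem_univ ℓ₀), ← add_sum_erase _ _ (mem_univ ℓ₀),
    sum_congr rfl hother, update_self, hdeg]
  simp only [and_true]
  omega

variable {d A} {b : ι → ℕ}

lemma GaleCondition.tight_union (h : GaleCondition d A b) {J J' : Finset ι}
    (hJ : ∑ j ∈ J, b j = capacity d A J) (hJ' : ∑ j ∈ J', b j = capacity d A J') :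
    ∑ j ∈ J ∪ J', b j = capacity d A (J ∪ J') := by
  have := capacity_union_add_capacity_inter_le d A J J'
  have := sum_union_inter (s₁ := J) (s₂ := J') (f := b)
  have := h (J ∪ J')
  have := h (J ∩ J')
  omega

variable [Fintype ι]

lemma GaleCondition.exists_greatest_tight_notMem (h : GaleCondition d A b) (j₀ : ι) :
    ∃ J₀, j₀ ∉ J₀ ∧ ∑ j ∈ J₀, b j = capacity d A J₀ ∧
      ∀ J, j₀ ∉ J → ∑ j ∈ J, b j = capacity d A J → J ⊆ J₀ := by
  set T := {J ∈ (univ.erase j₀).powerset | ∑ j ∈ J, b j = capacity d A J}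
  have hmem : ∀ {J}, J ∈ T ↔ j₀ ∉ J ∧ ∑ j ∈ J, b j = capacity d A J := by
    simp [T, subset_erase]
  obtain ⟨J₀, hJ₀, hmax⟩ := T.exists_max_image card ⟨∅, hmem.2 ⟨notMem_empty _, by
    simp [capacity_empty]⟩⟩
  obtain ⟨hj₀, htight⟩ := hmem.1 hJ₀
  refine ⟨J₀, hj₀, htight, fun J hj hJ => ?_⟩
  have hU : J ∪ J₀ ∈ T := hmem.2 ⟨by simp [hj, hj₀], h.tight_union hJ htight⟩
  have := eq_of_subset_of_card_le (subset_union_right : J₀ ⊆ J ∪ J₀) (hmax _ hU)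
  exact this ▸ subset_union_left

/-- Take for `ℓ₀` a sink not saturated by the greatest tight set avoiding `j₀`. -/
lemma GaleCondition.exists_reduce (h : GaleCondition d A b) {j₀ : ι} (hj₀ : 0 < b j₀) :
    ∃ ℓ₀ ∈ A j₀, 0 < d ℓ₀ ∧ GaleCondition (update d ℓ₀ (d ℓ₀ - 1))
      (update A j₀ ((A j₀).erase ℓ₀)) (update b j₀ (b j₀ - 1)) := by
  obtain ⟨J₀, hj₀J₀, htight, hgreatest⟩ := h.exists_greatest_tight_notMem j₀
  have hlt : capacity d A J₀ < capacity d A (insert j₀ J₀) := by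
    have := h (insert j₀ J₀)
    rw [sum_insert hj₀J₀] at this
    omega
  obtain ⟨ℓ₀, -, hℓ₀⟩ := exists_lt_of_sum_lt hlt
  simp only [degOn_insert A hj₀J₀] at hℓ₀
  have hℓ₀A : ℓ₀ ∈ A j₀ := by
    by_contra hn
    simp [hn] at hℓ₀
  rw [if_pos hℓ₀A] at hℓ₀
  have hunsat : degOn A J₀ ℓ₀ < d ℓ₀ := by omega
  refine ⟨ℓ₀, hℓ₀A, by omega, fun J => ?_⟩
  have hcap := capacity_update_erase_add d A hℓ₀A J
  have hb := sum_update_sub_one_add hj₀ J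
  have hJ := h J
  by_cases hj₀J : j₀ ∈ J
  · simp only [hj₀J, if_true] at hb hcap
    omega
  · simp only [hj₀J, if_false, add_zero, Nat.sub_zero] at hb hcap
    by_cases htightJ : ∑ j ∈ J, b j = capacity d A J
    · have := degOn_mono A (hgreatest J hj₀J htightJ) ℓ₀
      omega
    · omega

/-- Gale's supply–demand theorem, for unit arc capacities. -/
theorem GaleCondition.exists_subsets (h : GaleCondition d A b)
    (hsum : ∑ j, b j = ∑ ℓ, d ℓ) :
    ∃ w : ι → Finset α, (∀ j, w j ⊆ A j) ∧ (∀ j, #(w j) = b j) ∧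
      ∀ ℓ, degOn w univ ℓ = d ℓ := by
  obtain ⟨N, hN⟩ : ∃ N, ∑ j, b j = N := ⟨_, rfl⟩
  induction N generalizing d A b with
  | zero =>
    have hb : ∀ j, b j = 0 := fun j => sum_eq_zero_iff.mp hN j (mem_univ j)
    have hd : ∀ ℓ, d ℓ = 0 := fun ℓ => sum_eq_zero_iff.mp (hsum ▸ hN) ℓ (mem_univ ℓ)
    exact ⟨fun _ => ∅, fun _ => empty_subset _, fun j => (hb j).symm ▸ card_empty,
      fun ℓ => by simp [degOn, hd]⟩
  | succ N ih =>
    obtain ⟨j₀, -, hj₀⟩ : ∃ j₀ ∈ univ, 0 < b j₀ := sum_pos_iff.mp (by omega)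
    obtain ⟨ℓ₀, hℓ₀A, hdℓ₀, hreduced⟩ := h.exists_reduce hj₀
    have hb := sum_update_sub_one_add hj₀ univ
    have hd := sum_update_sub_one_add hdℓ₀ univ
    simp only [mem_univ, if_true] at hb hd
    obtain ⟨w, hwA, hwcard, hwdeg⟩ := ih hreduced (by omega) (by omega)
    have hℓ₀w : ℓ₀ ∉ w j₀ := fun hmem => by simpa using hwA j₀ hmem
    refine ⟨update w j₀ (insert ℓ₀ (w j₀)), fun j => ?_, fun j => ?_, fun ℓ => ?_⟩
    · rcases eq_or_ne j j₀ with rfl | hj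
      · simpa [insert_subset_iff, hℓ₀A] using (hwA j).trans (by simp [erase_subset])
      · simpa [update_of_ne hj] using hwA j
    · rcases eq_or_ne j j₀ with rfl | hj
      · simp [card_insert_of_notMem hℓ₀w, hwcard]
        omega
      · simpa [update_of_ne hj] using hwcard j
    · have := degOn_update_add w j₀ (insert ℓ₀ (w j₀)) univ ℓ
      have := hwdeg ℓ
      rcases eq_or_ne ℓ ℓ₀ with rfl | hℓ
      · simp_all
        omega
      · simp_all

end Transportation

section Decomposition

variable {ι α : Type*} [DecidableEq α]

lemma sum_degOn (H : ι → Finset α) (J : Finset ι) (T : Finset α) :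
    ∑ ℓ ∈ T, degOn H J ℓ = ∑ j ∈ J, #(T ∩ H j) := by
  have := sum_card_bipartiteAbove_eq_sum_card_bipartiteBelow (s := J) (t := T)
    (r := fun j ℓ => ℓ ∈ H j)
  simp only [bipartiteAbove, bipartiteBelow, filter_mem_eq_inter] at this
  exact this.symm

lemma degOn_erase_add_card_filter {H : ι → Finset α} {f : ι → α} (hfH : ∀ j, f j ∈ H j)
    (J : Finset ι) (ℓ : α) :
    degOn (fun j => (H j).erase (f j)) J ℓ + #{j ∈ J | f j = ℓ} = degOn H J ℓ := by
  rw [degOn, degOn,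
    ← card_filter_add_card_filter_not (s := {j ∈ J | ℓ ∈ H j}) (fun j => f j ≠ ℓ),
    filter_filter, filter_filter]
  congr 1 <;> congr 1 <;> ext j <;> simp only [mem_filter, mem_erase]
  · tauto
  · exact ⟨fun h => ⟨h.1, h.2 ▸ hfH j, not_not.mpr h.2⟩, fun h => ⟨h.1, not_not.mp h.2.2⟩⟩

variable [Fintype ι] {H : ι → Finset α} {m : ℕ}

lemma card_le_card_biUnion_of_degOn_le (hm : 0 < m) (hcard : ∀ j, #(H j) = m)
    (hdeg : ∀ ℓ, degOn H univ ℓ ≤ m) (J : Finset ι) : #J ≤ #(J.biUnion H) := by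
  refine Nat.le_of_mul_le_mul_right ?_ hm
  calc #J * m = ∑ j ∈ J, #(J.biUnion H ∩ H j) := by
        rw [sum_congr rfl fun j hj => by
          rw [inter_eq_right.mpr (subset_biUnion_of_mem H hj), hcard], sum_const, smul_eq_mul]
    _ = ∑ ℓ ∈ J.biUnion H, degOn H J ℓ := (sum_degOn H J _).symm
    _ ≤ ∑ _ℓ ∈ J.biUnion H, m :=
        sum_le_sum fun ℓ _ => (degOn_mono H (subset_univ J) ℓ).trans (hdeg ℓ)
    _ = #(J.biUnion H) * m := by rw [sum_const, smul_eq_mul]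

variable [Fintype α]

lemma card_degOn_eq_sdiff_biUnion_le (hm : 0 < m) (hcard : ∀ j, #(H j) = m) (J : Finset ι) :
    #(({ℓ | degOn H univ ℓ = m} : Finset α) \ J.biUnion H) ≤ Fintype.card ι - #J := by
  classical
  rw [← card_compl]
  set F := ({ℓ | degOn H univ ℓ = m} : Finset α) \ J.biUnion H
  have hJ : ∀ j ∈ J, F ∩ H j = ∅ := fun j hj => by
    refine eq_empty_of_forall_notMem fun ℓ hℓ => ?_
    simp only [F, mem_inter, mem_sdiff, mem_biUnion, not_exists, not_and] at hℓ
    exact hℓ.1.2 j hj hℓ.2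
  refine Nat.le_of_mul_le_mul_right ?_ hm
  calc #F * m = ∑ ℓ ∈ F, degOn H univ ℓ := by
        rw [sum_congr rfl fun ℓ hℓ => (mem_filter.mp (mem_sdiff.mp hℓ).1).2, sum_const,
          smul_eq_mul]
    _ = ∑ j ∈ Jᶜ, #(F ∩ H j) := by
        rw [sum_degOn, ← sum_compl_add_sum J,
          sum_eq_zero (s := J) fun j hj => by rw [hJ j hj, card_empty], add_zero]
    _ ≤ ∑ j ∈ Jᶜ, #(H j) := sum_le_sum fun j _ => card_le_card inter_subset_right
    _ = #Jᶜ * m := by rw [sum_congr rfl fun j _ => hcard j, sum_const, smul_eq_mul]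

def padDummies (H : ι → Finset α) (m c : ℕ) : ι ⊕ Fin c → Finset α :=
  Sum.elim H fun _ => ({ℓ | 0 < degOn H univ ℓ ∧ degOn H univ ℓ < m} : Finset α)

lemma card_le_card_biUnion_padDummies (hm : 0 < m) (hcard : ∀ j, #(H j) = m)
    (hdeg : ∀ ℓ, degOn H univ ℓ ≤ m) {c : ℕ}
    (hc : Fintype.card ι + c ≤ #({ℓ | 0 < degOn H univ ℓ} : Finset α)) (s : Finset (ι ⊕ Fin c)) :
    #s ≤ #(s.biUnion (padDummies H m c)) := by
  have hmissed := card_degOn_eq_sdiff_biUnion_le hm hcard s.toLeft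
  set Full : Finset α := {ℓ | degOn H univ ℓ = m}
  have hleft : s.toLeft.biUnion H ⊆ s.biUnion (padDummies H m c) :=
    biUnion_subset.mpr fun j hj => subset_biUnion_of_mem (padDummies H m c) (mem_toLeft.mp hj)
  rw [← card_toLeft_add_card_toRight]
  rcases s.toRight.eq_empty_or_nonempty with hR | ⟨i, hi⟩
  · rw [hR, card_empty, add_zero]
    exact (card_le_card_biUnion_of_degOn_le hm hcard hdeg _).trans (card_le_card hleft)
  have hcover : ({ℓ | 0 < degOn H univ ℓ} : Finset α) \ (Full \ s.toLeft.biUnion H) ⊆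
      s.biUnion (padDummies H m c) := by
    intro ℓ hℓ
    simp only [Full, mem_sdiff, mem_filter, mem_univ, true_and, not_and, not_not] at hℓ
    by_cases hfull : degOn H univ ℓ = m
    · exact hleft (hℓ.2 hfull)
    · exact mem_biUnion.mpr ⟨.inr i, mem_toRight.mp hi,
        mem_filter.mpr ⟨mem_univ _, hℓ.1, lt_of_le_of_ne (hdeg ℓ) hfull⟩⟩
  have := card_le_univ s.toRight
  rw [Fintype.card_fin] at this
  have := le_card_sdiff (Full \ s.toLeft.biUnion H) {ℓ | 0 < degOn H univ ℓ}
  have := card_le_card hcover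
  have := card_le_univ s.toLeft
  omega

/-- The dummy vertices force Hall's matching of `padDummies` onto all non-isolated right
vertices. -/
theorem exists_matching_covering_max_degOn (hm : 0 < m) (hcard : ∀ j, #(H j) = m)
    (hdeg : ∀ ℓ, degOn H univ ℓ ≤ m) :
    ∃ f : ι → α, Injective f ∧ (∀ j, f j ∈ H j) ∧
      ∀ ℓ, degOn H univ ℓ = m → ℓ ∈ Set.range f := by
  set P : Finset α := {ℓ | 0 < degOn H univ ℓ}
  have hP : ∀ c x, padDummies H m c x ⊆ P := by
    rintro c (j | i) ℓ hℓ
    · exact mem_filter.mpr ⟨mem_univ _, card_pos.mpr ⟨j, mem_filter.mpr ⟨mem_univ _, hℓ⟩⟩⟩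
    · exact mem_filter.mpr ⟨mem_univ _, (mem_filter.mp hℓ).2.1⟩
  have hιP : Fintype.card ι ≤ #P := (card_le_card_biUnion_of_degOn_le hm hcard hdeg univ).trans
    (card_le_card (biUnion_subset.mpr fun j _ => hP 0 (.inl j)))
  obtain ⟨c, hc⟩ : ∃ c, Fintype.card ι + c = #P := ⟨_, Nat.add_sub_cancel' hιP⟩
  obtain ⟨f, hfinj, hf⟩ := (all_card_le_biUnion_card_iff_exists_injective _).mp
    (card_le_card_biUnion_padDummies hm hcard hdeg hc.le)
  have himage : univ.image f = P := by
    refine eq_of_subset_of_card_le (image_subset_iff.mpr fun x _ => hP c x (hf x)) ?_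
    rw [card_image_of_injective _ hfinj, card_univ, Fintype.card_sum, Fintype.card_fin]
    omega
  refine ⟨f ∘ Sum.inl, hfinj.comp Sum.inl_injective, fun j => hf (.inl j), fun ℓ hℓ => ?_⟩
  have hℓP : ℓ ∈ P := mem_filter.mpr ⟨mem_univ _, by omega⟩
  obtain ⟨x, -, rfl⟩ := mem_image.mp (himage ▸ hℓP)
  rcases x with j | i
  · exact ⟨j, rfl⟩
  · have := (mem_filter.mp (hf (.inr i))).2.2
    omega

/-- König's edge-colouring theorem, peeling off one matching at a time. -/
theorem exists_rows_of_degOn_le (m : ℕ) (H : ι → Finset α) (hcard : ∀ j, #(H j) = m)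
    (hdeg : ∀ ℓ, degOn H univ ℓ ≤ m) :
    ∃ g : Fin m → ι → α, (∀ i, Injective (g i)) ∧
      ∀ j, Injective (g · j) ∧ Set.range (g · j) = H j := by
  induction m generalizing H with
  | zero =>
    exact ⟨Fin.elim0, fun i => i.elim0, fun j => ⟨fun i => i.elim0, by
      rw [Set.range_eq_empty, card_eq_zero.mp (hcard j), coe_empty]⟩⟩
  | succ m ih =>
    obtain ⟨f, hfinj, hfH, hfull⟩ :=
      exists_matching_covering_max_degOn m.succ_pos hcard hdeg
    have hcard' : ∀ j, #((H j).erase (f j)) = m := fun j => by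
      rw [card_erase_of_mem (hfH j), hcard, Nat.add_sub_cancel]
    have hdeg' : ∀ ℓ, degOn (fun j => (H j).erase (f j)) univ ℓ ≤ m := fun ℓ => by
      have hsplit := degOn_erase_add_card_filter hfH univ ℓ
      have := hdeg ℓ
      by_cases hℓ : ℓ ∈ Set.range f
      · obtain ⟨j, rfl⟩ := hℓ
        have : 0 < #{j' | f j' = f j} := card_pos.mpr ⟨j, by simp⟩
        omega
      · have : degOn H univ ℓ ≠ m + 1 := fun h => hℓ (hfull ℓ h)
        omega
    obtain ⟨g, hgrow, hgcol⟩ := ih _ hcard' hdeg'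
    refine ⟨Fin.cons f g, Fin.cases hfinj hgrow, fun j => ?_⟩
    have hcol : (fun i => (Fin.cons f g : Fin (m + 1) → ι → α) i j) = Fin.cons (f j) (g · j) :=
      funext (Fin.cases rfl fun _ => rfl)
    rw [hcol, Fin.cons_injective_iff, Fin.range_cons, (hgcol j).2]
    refine ⟨⟨by simp, (hgcol j).1⟩, ?_⟩
    rw [coe_erase, Set.insert_sdiff_singleton, Set.insert_eq_of_mem (mem_coe.mpr (hfH j))]

end Decomposition

lemma card_filter_apply_eq_of_injective {β γ : Type*} [Fintype β] [DecidableEq γ] {v : β → γ}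
    (hv : Injective v) {s : Finset γ} (hs : Set.range v = s) (c : γ) :
    #{i | v i = c} = if c ∈ s then 1 else 0 := by
  split_ifs with hc
  · obtain ⟨i, rfl⟩ : c ∈ Set.range v := hs ▸ hc
    exact card_eq_one.mpr ⟨i, by ext; simp [hv.eq_iff]⟩
  · exact card_eq_zero.mpr (filter_eq_empty_iff.mpr fun i _ hi => hc (by
      rw [← mem_coe, ← hs]; exact ⟨i, hi⟩))

section LatinArrays

variable {r m s k : ℕ}

lemma symCount_eq_sum_rows (M : Fin r → Fin s → Fin k) (ℓ : Fin k) :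
    symCount M ℓ = ∑ i, #{j | M i j = ℓ} := by
  simp only [symCount, card_filter, Fintype.sum_prod_type]

lemma symCount_eq_sum_cols (M : Fin r → Fin s → Fin k) (ℓ : Fin k) :
    symCount M ℓ = ∑ j, #{i | M i j = ℓ} := by
  simp only [symCount, card_filter, Fintype.sum_prod_type_right]

lemma sum_symCount (M : Fin r → Fin s → Fin k) : ∑ ℓ, symCount M ℓ = r * s := by
  simp only [symCount]
  rw [← card_eq_sum_card_fiberwise fun _ _ => mem_coe.mpr (mem_univ _), card_univ,
    Fintype.card_prod, Fintype.card_fin, Fintype.card_fin]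

lemma symCount_le_of_row_injective {M : Fin r → Fin s → Fin k} (hM : ∀ i, Injective (M i))
    (ℓ : Fin k) : symCount M ℓ ≤ r := by
  rw [symCount_eq_sum_rows]
  calc ∑ i, #{j | M i j = ℓ} ≤ ∑ _i : Fin r, 1 := sum_le_sum fun i _ =>
        card_le_one.mpr fun _ ha _ hb => hM i ((mem_filter.mp ha).2.trans (mem_filter.mp hb).2.symm)
    _ = r := by simp

lemma symCount_append (L : Fin r → Fin s → Fin k) (B : Fin m → Fin s → Fin k) (ℓ : Fin k) :
    symCount (Fin.append L B) ℓ = symCount L ℓ + symCount B ℓ := by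
  simp only [symCount_eq_sum_rows, Fin.sum_univ_add, Fin.append_left, Fin.append_right]

lemma latinArr_append_iff (L : Fin r → Fin s → Fin k) (B : Fin m → Fin s → Fin k) :
    latinArr (Fin.append L B) ↔ latinArr L ∧ latinArr B ∧ ∀ a b j, L a j ≠ B b j := by
  have hcol : ∀ j, Injective (fun i => Fin.append L B i j) ↔
      Injective (L · j) ∧ Injective (B · j) ∧ ∀ a b, L a j ≠ B b j := fun j => by
    have : (fun i => Fin.append L B i j) = Fin.append (L · j) (B · j) :=
      funext fun i => Fin.addCases (fun a => by simp) (fun b => by simp) i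
    rw [this, Fin.append_injective_iff]
  unfold latinArr
  rw [Fin.forall_fin_add]
  simp only [Fin.append_left, Fin.append_right, hcol]
  constructor
  · rintro ⟨⟨hLr, hBr⟩, hcols⟩
    exact ⟨⟨hLr, fun j => (hcols j).1⟩, ⟨hBr, fun j => (hcols j).2.1⟩,
      fun a b j => (hcols j).2.2 a b⟩
  · rintro ⟨⟨hLr, hLc⟩, ⟨hBr, hBc⟩, hLB⟩
    exact ⟨⟨hLr, hBr⟩, fun j => ⟨hLc j, hBc j, fun a b => hLB a b j⟩⟩

lemma exists_rhoLatinSquare_extends_iff (ρ : Fin k → ℕ) {L : Fin r → Fin (r + m) → Fin k}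
    (hL : latinArr L) (h : r ≤ r + m) :
    (∃ S, rhoLatinSquare ρ S ∧ extends' h le_rfl L S) ↔
      ∃ B : Fin m → Fin (r + m) → Fin k, latinArr B ∧ (∀ a b j, L a j ≠ B b j) ∧
        ∀ ℓ, symCount L ℓ + symCount B ℓ = ρ ℓ := by
  have hcast : ∀ a : Fin r, Fin.castLE h a = Fin.castAdd m a := fun _ => rfl
  simp only [rhoLatinSquare, extends', hcast, Fin.castLE_refl]
  constructor
  · rintro ⟨S, ⟨hS, hρ⟩, hSL⟩
    have hS_eq : S = Fin.append L (fun b => S (Fin.natAdd r b)) := by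
      conv_lhs => rw [← Fin.append_castAdd_natAdd (f := S)]
      simp only [funext fun a => funext (hSL a)]
    rw [hS_eq, latinArr_append_iff] at hS
    rw [hS_eq] at hρ
    exact ⟨_, hS.2.1, hS.2.2, fun ℓ => (symCount_append _ _ ℓ).symm.trans (hρ ℓ)⟩
  · rintro ⟨B, hB, hLB, hρ⟩
    exact ⟨Fin.append L B, ⟨(latinArr_append_iff L B).mpr ⟨hL, hB, hLB⟩,
      fun ℓ => (symCount_append L B ℓ).trans (hρ ℓ)⟩, fun a j => by rw [Fin.append_left]⟩

lemma card_mul_le_sum_min_symCount_muCols {L : Fin r → Fin s → Fin k}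
    {B : Fin m → Fin s → Fin k} (hB : ∀ j, Injective (B · j)) (hLB : ∀ a b j, L a j ≠ B b j)
    (J : Finset (Fin s)) : #J * m ≤ ∑ ℓ, min (symCount B ℓ) (muCols L J ℓ) := by
  have hcol : ∀ j ℓ, #{i | B i j = ℓ} ≤ if ∀ a, L a j ≠ ℓ then 1 else 0 := fun j ℓ => by
    split_ifs with hmiss
    · exact card_le_one.mpr fun _ ha _ hb =>
        hB j ((mem_filter.mp ha).2.trans (mem_filter.mp hb).2.symm)
    · push Not at hmiss
      obtain ⟨a, rfl⟩ := hmiss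
      exact (card_eq_zero.mpr (filter_eq_empty_iff.mpr fun i _ hi => hLB a i j hi.symm)).le
  calc #J * m = ∑ j ∈ J, ∑ ℓ, #{i | B i j = ℓ} := by
        simp only [← card_eq_sum_card_fiberwise fun _ _ => mem_coe.mpr (mem_univ _), card_univ,
          Fintype.card_fin, sum_const, smul_eq_mul]
    _ = ∑ ℓ, ∑ j ∈ J, #{i | B i j = ℓ} := sum_comm
    _ ≤ ∑ ℓ, min (symCount B ℓ) (muCols L J ℓ) := sum_le_sum fun ℓ _ => le_min
        ((sum_le_sum_of_subset (subset_univ J)).trans (symCount_eq_sum_cols B ℓ).ge)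
        ((sum_le_sum fun j _ => hcol j ℓ).trans (by rw [muCols, card_filter]))

lemma exists_rows_of_card_mul_le_sum_min (L : Fin r → Fin s → Fin k) {d : Fin k → ℕ}
    (hd : ∑ ℓ, d ℓ = s * m) (hdm : ∀ ℓ, d ℓ ≤ m)
    (hJ : ∀ J : Finset (Fin s), #J * m ≤ ∑ ℓ, min (d ℓ) (muCols L J ℓ)) :
    ∃ B : Fin m → Fin s → Fin k, latinArr B ∧ (∀ a b j, L a j ≠ B b j) ∧
      ∀ ℓ, symCount B ℓ = d ℓ := by
  set A : Fin s → Finset (Fin k) := fun j => {ℓ | ∀ a, L a j ≠ ℓ}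
  have hA : ∀ J ℓ, degOn A J ℓ = muCols L J ℓ := fun J ℓ => by simp [A, degOn, muCols]
  have hgale : GaleCondition d A fun _ => m := fun J => by
    simpa [capacity, hA] using hJ J
  obtain ⟨H, hHA, hHcard, hHdeg⟩ := hgale.exists_subsets (by simp [hd])
  obtain ⟨g, hrow, hcol⟩ := exists_rows_of_degOn_le m H hHcard fun ℓ => hHdeg ℓ ▸ hdm ℓ
  refine ⟨g, ⟨hrow, fun j => (hcol j).1⟩, fun a b j => ?_, fun ℓ => ?_⟩
  · have : g b j ∈ A j := hHA j (mem_coe.mp ((hcol j).2 ▸ ⟨b, rfl⟩))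
    exact ((mem_filter.mp this).2 a)
  · simp only [symCount_eq_sum_cols,
      fun j => card_filter_apply_eq_of_injective (hcol j).1 (hcol j).2 ℓ, ← card_filter]
    exact hHdeg ℓ

end LatinArrays

theorem stmt4_general (n k r : ℕ) (hrn : r < n)
    (ρ : Fin k → ℕ)
    (hsum : ∑ ℓ, ρ ℓ = n ^ 2)
    (L : Fin r → Fin n → Fin k) (hL : latinArr L)
    (he : ∀ ℓ, symCount L ℓ ≤ ρ ℓ) :
    (∃ S : Fin n → Fin n → Fin k, rhoLatinSquare ρ S ∧ extends' hrn.le le_rfl L S) ↔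
      ((∀ ℓ, ρ ℓ - symCount L ℓ ≤ n - r) ∧
        ∀ J : Finset (Fin n),
          J.card * (n - r) ≤ ∑ ℓ, min (ρ ℓ - symCount L ℓ) (muCols L J ℓ)) := by
  obtain ⟨m, rfl⟩ := Nat.exists_eq_add_of_le hrn.le
  rw [exists_rhoLatinSquare_extends_iff ρ hL, Nat.add_sub_cancel_left]
  constructor
  · rintro ⟨B, hB, hLB, hcount⟩
    have hdef : ∀ ℓ, ρ ℓ - symCount L ℓ = symCount B ℓ := fun ℓ => by
      have := hcount ℓ
      omega
    simp only [hdef]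
    exact ⟨symCount_le_of_row_injective hB.1, card_mul_le_sum_min_symCount_muCols hB.2 hLB⟩
  · rintro ⟨hdm, hJ⟩
    have hdsum : ∑ ℓ, (ρ ℓ - symCount L ℓ) = (r + m) * m := by
      rw [sum_tsub_distrib _ fun ℓ _ => he ℓ, hsum, sum_symCount, Nat.sub_eq_of_eq_add]
      ring
    obtain ⟨B, hB, hLB, hcount⟩ := exists_rows_of_card_mul_le_sum_min L hdsum hdm hJ
    refine ⟨B, hB, hLB, fun ℓ => ?_⟩
    have := hcount ℓ
    have := he ℓ
    omega

/-- Hall-type completion: an `r × n` `ρ`-latin rectangle completes to an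
`n × n` `ρ`-latin square iff `ρ_ℓ - e_ℓ ≤ n - r` for all `ℓ` and
`|J|(n-r) ≤ ∑_ℓ min{ρ_ℓ - e_ℓ, μ_J(ℓ)}` for all column sets `J`. -/
theorem stmt4 (n k r : ℕ) (hr : 1 ≤ r) (hrn : r < n) (hnk : n ≤ k)
    (ρ : Fin k → ℕ) (hρ1 : ∀ ℓ, 1 ≤ ρ ℓ) (hρn : ∀ ℓ, ρ ℓ ≤ n)
    (hsum : ∑ ℓ, ρ ℓ = n ^ 2)
    (L : Fin r → Fin n → Fin k) (hL : latinArr L)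
    (he : ∀ ℓ, symCount L ℓ ≤ ρ ℓ) :
    (∃ S : Fin n → Fin n → Fin k, rhoLatinSquare ρ S ∧ extends' hrn.le le_rfl L S) ↔
      ((∀ ℓ, ρ ℓ - symCount L ℓ ≤ n - r) ∧
        ∀ J : Finset (Fin n),
          J.card * (n - r) ≤ ∑ ℓ, min (ρ ℓ - symCount L ℓ) (muCols L J ℓ)) :=
  stmt4_general n k r hrn ρ hsum L hL he
end

section
/- Let L be an r×s ρ-latin rectangle with e_ℓ ≥ ρ_ℓ − n + max{r,s} for all ℓ ∈ [k]. Then the number of symbols satisfies k ≥ (n² − rs)/(n − max{r,s}), and consequently k ≥ n + max{r,s}. -/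
open Finset

/-- If `e_ℓ ≥ ρ_ℓ - n + max{r,s}` for all symbols, then
`k(n - max{r,s}) ≥ n² - rs`, and consequently `k ≥ n + max{r,s}`. -/
theorem stmt7 (n k r s : ℕ) (hr : r < n) (hs : s < n)
    (ρ : Fin k → ℕ) (hρ1 : ∀ ℓ, 1 ≤ ρ ℓ) (hρn : ∀ ℓ, ρ ℓ ≤ n)
    (hsum : ∑ ℓ, ρ ℓ = n ^ 2)
    (L : Fin r → Fin s → Fin k) (hL : latinArr L)
    (he : ∀ ℓ, symCount L ℓ ≤ ρ ℓ)
    (hbig : ∀ ℓ, ρ ℓ + max r s ≤ symCount L ℓ + n) :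
    n ^ 2 - r * s ≤ k * (n - max r s) ∧ n + max r s ≤ k := by

  set m := max r s with hm
  have hmn : m < n := by simp [hm, hr, hs]
  have hcells : ∑ ℓ, symCount L ℓ = r * s := by
    have := Finset.card_eq_sum_card_fiberwise
      (s := (univ : Finset (Fin r × Fin s))) (t := (univ : Finset (Fin k)))
      (f := fun p => L p.1 p.2) (fun x _ => mem_univ _)
    simpa [symCount] using this.symm
  have hsum2 : n ^ 2 + k * m ≤ r * s + k * n := by
    calc n ^ 2 + k * m = ∑ ℓ, (ρ ℓ + m) := by
          simp [Finset.sum_add_distrib, hsum, mul_comm]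
      _ ≤ ∑ ℓ, (symCount L ℓ + n) := Finset.sum_le_sum (fun ℓ _ => hbig ℓ)
      _ = r * s + k * n := by simp [Finset.sum_add_distrib, hcells, mul_comm]
  have hrs : r * s ≤ m * m := Nat.mul_le_mul (le_max_left r s) (le_max_right r s)
  constructor
  · have hmul : k * m + k * (n - m) = k * n := by
      rw [← Nat.mul_add, Nat.add_sub_cancel' hmn.le]
    omega
  · have h1 : (n + m) * (n - m) ≤ k * (n - m) := by
      have hd := Nat.sub_add_cancel hmn.le
      nlinarith [hd]
    exact Nat.le_of_mul_le_mul_right h1 (by omega)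
end

section
/- Existence of fitting-sequence totals: if L is an r×s ρ-latin rectangle that extends to an n×n ρ-latin square, then with P_t := {ℓ ∈ [k] : ρ_ℓ − e_ℓ > n − t} for t ∈ {r, s}, one has Σ_{ℓ∈P_r}(ρ_ℓ − e_ℓ) ≤ r(n−s) + |P_r|(n−r) and Σ_{ℓ∈P_s}(ρ_ℓ − e_ℓ) ≤ s(n−r) + |P_s|(n−s). -/
/-!
Outside the top-left `r × s` corner, symbol `ℓ` occupies `ρ_ℓ - e_ℓ` cells of the square, split
between the top-right `r × (n - s)` block and the bottom `n - r` rows. Since `ℓ` occurs at most once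
per row, at most `n - r` of them lie in the bottom rows, while all symbols together fill exactly the
`r (n - s)` cells of the top-right block. Summing over any set of symbols gives the first bound; the
second is the first one for the transposed square.
-/

open Finset

section CellCount

variable {ι κ α : Type*} [DecidableEq α]

def cellCount (S : ι → κ → α) (A : Finset (ι × κ)) (a : α) : ℕ :=
  #{p ∈ A | S p.1 p.2 = a}

variable (S : ι → κ → α)

lemma cellCount_union [DecidableEq ι] [DecidableEq κ] {A B : Finset (ι × κ)} (h : Disjoint A B)
    (a : α) :
    cellCount S (A ∪ B) a = cellCount S A a + cellCount S B a := by
  rw [cellCount, filter_union, card_union_of_disjoint (disjoint_filter_filter h)]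
  rfl

lemma sum_cellCount [Fintype α] (A : Finset (ι × κ)) : ∑ a, cellCount S A a = #A :=
  (card_eq_sum_card_fiberwise fun _ _ => mem_univ _).symm

lemma cellCount_flip_product (R : Finset ι) (C : Finset κ) (a : α) :
    cellCount (flip S) (C ×ˢ R) a = cellCount S (R ×ˢ C) a := by
  rw [cellCount, cellCount, ← map_swap_product, filter_map, card_map]
  rfl

lemma cellCount_prodMap {ι' κ' : Type*} (f : ι' ↪ ι) (g : κ' ↪ κ)
    (R : Finset ι') (C : Finset κ') (a : α) :
    cellCount S (R.map f ×ˢ C.map g) a = cellCount (fun i j => S (f i) (g j)) (R ×ˢ C) a := by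
  rw [cellCount, cellCount, ← prodMap_map_product, filter_map, card_map]
  rfl

lemma cellCount_product_univ_le_card [Fintype κ] (hrow : ∀ i, Function.Injective (S i))
    (R : Finset ι) (a : α) : cellCount S (R ×ˢ univ) a ≤ #R := by
  refine card_le_card_of_injOn Prod.fst (fun p hp => ?_) fun p hp q hq hpq => ?_
  · exact (mem_product.mp (mem_filter.mp hp).1).1
  · have hp := (mem_filter.mp hp).2
    have hq := (mem_filter.mp hq).2
    exact Prod.ext hpq (hrow p.1 (hp.trans (hpq ▸ hq.symm)))

lemma cellCount_univ_eq [Fintype ι] [Fintype κ] [DecidableEq ι] [DecidableEq κ]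
    (R : Finset ι) (C : Finset κ) (a : α) :
    cellCount S univ a =
      cellCount S (R ×ˢ C) a + cellCount S (R ×ˢ Cᶜ) a + cellCount S (Rᶜ ×ˢ univ) a := by
  rw [← cellCount_union S (disjoint_product.mpr (.inr disjoint_compl_right)), ← product_union,
    union_compl, ← cellCount_union S (disjoint_product.mpr (.inl disjoint_compl_right)),
    ← union_product, union_compl, univ_product_univ]

lemma sum_cellCount_sub_le [Fintype ι] [Fintype κ] [DecidableEq ι] [DecidableEq κ] [Fintype α]
    (hrow : ∀ i, Function.Injective (S i)) (R : Finset ι) (C : Finset κ) (P : Finset α) :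
    ∑ a ∈ P, (cellCount S univ a - cellCount S (R ×ˢ C) a) ≤ #R * #Cᶜ + #P * #Rᶜ :=
  calc ∑ a ∈ P, (cellCount S univ a - cellCount S (R ×ˢ C) a)
      = ∑ a ∈ P, (cellCount S (R ×ˢ Cᶜ) a + cellCount S (Rᶜ ×ˢ univ) a) :=
        sum_congr rfl fun a _ => by rw [cellCount_univ_eq S R C]; omega
    _ = ∑ a ∈ P, cellCount S (R ×ˢ Cᶜ) a + ∑ a ∈ P, cellCount S (Rᶜ ×ˢ univ) a :=
        sum_add_distrib
    _ ≤ ∑ a, cellCount S (R ×ˢ Cᶜ) a + ∑ _a ∈ P, #Rᶜ :=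
        add_le_add (sum_le_sum_of_subset (subset_univ P))
          (sum_le_sum fun a _ => cellCount_product_univ_le_card S hrow Rᶜ a)
    _ = #R * #Cᶜ + #P * #Rᶜ := by rw [sum_cellCount, card_product, sum_const, smul_eq_mul]

end CellCount

section Extension

variable {n k r s : ℕ}

lemma symCount_eq_cellCount_univ {m : ℕ} (S : Fin m → Fin n → Fin k) (ℓ : Fin k) :
    symCount S ℓ = cellCount S univ ℓ :=
  rfl

lemma symCount_flip {m : ℕ} (S : Fin m → Fin n → Fin k) (ℓ : Fin k) :
    symCount (flip S) ℓ = symCount S ℓ :=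
  cellCount_flip_product S univ univ ℓ

variable {hr : r ≤ n} {hs : s ≤ n} {L : Fin r → Fin s → Fin k} {S : Fin n → Fin n → Fin k}

lemma extends'.flip (hext : extends' hr hs L S) : extends' hs hr (flip L) (flip S) :=
  fun j i => hext i j

lemma extends'.symCount_eq_cellCount (hext : extends' hr hs L S) (ℓ : Fin k) :
    symCount L ℓ =
      cellCount S (univ.map (Fin.castLEEmb hr) ×ˢ univ.map (Fin.castLEEmb hs)) ℓ := by
  rw [cellCount_prodMap, show (fun i j => S (Fin.castLEEmb hr i) (Fin.castLEEmb hs j)) = L from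
    funext₂ hext]
  rfl

lemma extends'.sum_symCount_sub_le (hext : extends' hr hs L S)
    (hrow : ∀ i, Function.Injective (S i)) (P : Finset (Fin k)) :
    ∑ ℓ ∈ P, (symCount S ℓ - symCount L ℓ) ≤ r * (n - s) + #P * (n - r) := by
  simpa only [← symCount_eq_cellCount_univ, ← hext.symCount_eq_cellCount, card_compl, card_map,
    card_univ, Fintype.card_fin]
    using sum_cellCount_sub_le S hrow (univ.map (Fin.castLEEmb hr)) (univ.map (Fin.castLEEmb hs)) P

end Extension

theorem stmt19_general (n k r s : ℕ) (hr : r < n) (hs : s < n)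
    (ρ : Fin k → ℕ)
    (L : Fin r → Fin s → Fin k)
    (S : Fin n → Fin n → Fin k) (hS : rhoLatinSquare ρ S)
    (hext : extends' hr.le hs.le L S) :
    (∑ ℓ ∈ (univ : Finset (Fin k)).filter
        (fun ℓ => n - r < ρ ℓ - symCount L ℓ), (ρ ℓ - symCount L ℓ) ≤
      r * (n - s) + ((univ : Finset (Fin k)).filter
        (fun ℓ => n - r < ρ ℓ - symCount L ℓ)).card * (n - r)) ∧
    (∑ ℓ ∈ (univ : Finset (Fin k)).filter
        (fun ℓ => n - s < ρ ℓ - symCount L ℓ), (ρ ℓ - symCount L ℓ) ≤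
      s * (n - r) + ((univ : Finset (Fin k)).filter
        (fun ℓ => n - s < ρ ℓ - symCount L ℓ)).card * (n - s)) := by
  obtain ⟨⟨hrow, hcol⟩, hcount⟩ := hS
  simp only [← hcount]
  refine ⟨hext.sum_symCount_sub_le hrow _, ?_⟩
  simpa only [symCount_flip] using hext.flip.sum_symCount_sub_le hcol _

/-- If an `r × s` `ρ`-latin rectangle extends to an `n × n` `ρ`-latin square,
then with `P_t = {ℓ : ρ_ℓ - e_ℓ > n - t}`,
`∑_{ℓ∈P_r}(ρ_ℓ - e_ℓ) ≤ r(n-s) + |P_r|(n-r)` and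
`∑_{ℓ∈P_s}(ρ_ℓ - e_ℓ) ≤ s(n-r) + |P_s|(n-s)`. -/
theorem stmt19 (n k r s : ℕ) (hr : r < n) (hs : s < n) (hnk : n ≤ k)
    (ρ : Fin k → ℕ) (hρ1 : ∀ ℓ, 1 ≤ ρ ℓ) (hρn : ∀ ℓ, ρ ℓ ≤ n)
    (hsum : ∑ ℓ, ρ ℓ = n ^ 2)
    (L : Fin r → Fin s → Fin k) (hL : latinArr L)
    (he : ∀ ℓ, symCount L ℓ ≤ ρ ℓ)
    (S : Fin n → Fin n → Fin k) (hS : rhoLatinSquare ρ S)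
    (hext : extends' hr.le hs.le L S) :
    (∑ ℓ ∈ (univ : Finset (Fin k)).filter
        (fun ℓ => n - r < ρ ℓ - symCount L ℓ), (ρ ℓ - symCount L ℓ) ≤
      r * (n - s) + ((univ : Finset (Fin k)).filter
        (fun ℓ => n - r < ρ ℓ - symCount L ℓ)).card * (n - r)) ∧
    (∑ ℓ ∈ (univ : Finset (Fin k)).filter
        (fun ℓ => n - s < ρ ℓ - symCount L ℓ), (ρ ℓ - symCount L ℓ) ≤
      s * (n - r) + ((univ : Finset (Fin k)).filter
        (fun ℓ => n - s < ρ ℓ - symCount L ℓ)).card * (n - s)) :=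
  stmt19_general n k r s hr hs ρ L S hS hext
end
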